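/- Let C ⊆ ℍⁿ_κ be a closed κ-hyperbolically convex set, p = (p₁,…,p_{n+1}) ∈ ℍⁿ_κ and u = (u₁,…,u_{n+1}) ∈ K_C \ {0}. If (p_{n+1} − u_{n+1})(q_{n+1} − u_{n+1}/√(−κ⟨u,u⟩)) ≥ 0 for all q ∈ C, then (2 p_{n+1} e^{n+1} − u)ᵀ(q − u/√(−κ⟨u,u⟩)) ≥ 0 for all q ∈ C. -/

import Mathlib

noncomputable section

/-- Lorentzian inner product on ℝ^{n+1}. -/
def lip {n : ℕ} (x y : Fin (n+1) → ℝ) : ℝ :=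
  (∑ i : Fin n, x i.castSucc * y i.castSucc) - x (Fin.last n) * y (Fin.last n)

/-- Lorentzian norm (of vectors with nonnegative self-product). -/
def lnorm {n : ℕ} (x : Fin (n+1) → ℝ) : ℝ := Real.sqrt (lip x x)

/-- Euclidean dot product. -/
def edot {n : ℕ} (x y : Fin (n+1) → ℝ) : ℝ := ∑ i, x i * y i

/-- The matrix J = diag(1,…,1,−1) as a map. -/
def Jm {n : ℕ} (x : Fin (n+1) → ℝ) : Fin (n+1) → ℝ :=
  fun i => if i = Fin.last n then -(x i) else x i

/-- The κ-hyperbolic space form (hyperboloid model). -/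
def Hyp {n : ℕ} (κ : ℝ) : Set (Fin (n+1) → ℝ) :=
  {p | lip p p = -1/κ ∧ 0 < p (Fin.last n)}

/-- Inverse hyperbolic cosine. -/
def arcosh (x : ℝ) : ℝ := Real.log (x + Real.sqrt (x^2 - 1))

/-- Intrinsic distance on the κ-hyperbolic space form. -/
def dH {n : ℕ} (κ : ℝ) (p q : Fin (n+1) → ℝ) : ℝ :=
  (1 / Real.sqrt κ) * arcosh (-(κ * lip p q))

/-- Lorentzian projection onto the tangent space at p. -/
def projT {n : ℕ} (κ : ℝ) (p x : Fin (n+1) → ℝ) : Fin (n+1) → ℝ :=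
  x + (κ * lip p x) • p

/-- Logarithm map of the κ-hyperbolic space form. -/
def logH {n : ℕ} (κ : ℝ) (p q : Fin (n+1) → ℝ) : Fin (n+1) → ℝ :=
  (dH κ p q / lnorm (projT κ p q)) • projT κ p q

/-- Exponential map of the κ-hyperbolic space form. -/
def expH {n : ℕ} (κ : ℝ) (p v : Fin (n+1) → ℝ) : Fin (n+1) → ℝ :=
  Real.cosh (Real.sqrt κ * lnorm v) • p +
    (Real.sinh (Real.sqrt κ * lnorm v) / (Real.sqrt κ * lnorm v)) • v

/-- The cone spanned by a set. -/
def coneOf {n : ℕ} (C : Set (Fin (n+1) → ℝ)) : Set (Fin (n+1) → ℝ) :=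
  {x | ∃ t : ℝ, 0 ≤ t ∧ ∃ p ∈ C, x = t • p}

/-- The Lorentz cone. -/
def LorentzCone {n : ℕ} : Set (Fin (n+1) → ℝ) :=
  {x | lip x x ≤ 0 ∧ 0 ≤ x (Fin.last n)}

/-- The interior of the Lorentz cone. -/
def LorentzConeInt {n : ℕ} : Set (Fin (n+1) → ℝ) :=
  {x | lip x x < 0 ∧ 0 < x (Fin.last n)}

/-
Write `u = t • p'` with `t > 0` and `p' ∈ C`; then `√(-κ⟨u,u⟩) = t`, so the normalized point is `p'`.
Splitting the Euclidean product into its Lorentzian part and the last coordinates gives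
`(2 p_{n+1} e^{n+1} - u)ᵀ(q - p') = 2 (p_{n+1} - u_{n+1}) (q_{n+1} - p'_{n+1}) - ⟨u, q - p'⟩`,
and `⟨u, q - p'⟩ = t (⟨p', q⟩ + 1/κ) ≤ 0` by the reversed Cauchy–Schwarz inequality on `ℍⁿ_κ`.
-/

lemma lip_smul_left {n : ℕ} (t : ℝ) (x y : Fin (n+1) → ℝ) :
    lip (t • x) y = t * lip x y := by
  simp only [lip, Pi.smul_apply, smul_eq_mul, Finset.mul_sum, mul_sub, mul_assoc]

lemma lip_smul_right {n : ℕ} (t : ℝ) (x y : Fin (n+1) → ℝ) :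
    lip x (t • y) = t * lip x y := by
  simp only [lip, Pi.smul_apply, smul_eq_mul, Finset.mul_sum, mul_sub, mul_left_comm]

lemma lip_sub_right {n : ℕ} (x y z : Fin (n+1) → ℝ) :
    lip x (y - z) = lip x y - lip x z := by
  simp only [lip, Pi.sub_apply, mul_sub, Finset.sum_sub_distrib]
  ring

lemma edot_eq_lip_add {n : ℕ} (x y : Fin (n+1) → ℝ) :
    edot x y = lip x y + 2 * x (Fin.last n) * y (Fin.last n) := by
  rw [edot, Fin.sum_univ_castSucc, lip]
  ring

lemma edot_two_mul_smul_single_sub {n : ℕ} (a : ℝ) (u w : Fin (n+1) → ℝ) :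
    edot ((2 * a) • (Pi.single (Fin.last n) 1 : Fin (n+1) → ℝ) - u) w =
      2 * (a - u (Fin.last n)) * w (Fin.last n) - lip u w := by
  have hsingle : edot (Pi.single (Fin.last n) 1 : Fin (n+1) → ℝ) w = w (Fin.last n) := by
    simp [edot, Pi.single_apply]
  have hsub : edot ((2 * a) • (Pi.single (Fin.last n) 1 : Fin (n+1) → ℝ) - u) w =
      2 * a * edot (Pi.single (Fin.last n) 1 : Fin (n+1) → ℝ) w - edot u w := by
    simp only [edot, Pi.sub_apply, Pi.smul_apply, smul_eq_mul, sub_mul, Finset.sum_sub_distrib,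
      Finset.mul_sum, mul_assoc]
  rw [hsub, hsingle, edot_eq_lip_add]
  ring

/-- Reversed Cauchy–Schwarz inequality on the hyperboloid. -/
lemma lip_le_of_mem_Hyp {n : ℕ} {κ : ℝ} (hκ : 0 < κ) {p q : Fin (n+1) → ℝ}
    (hp : p ∈ Hyp κ) (hq : q ∈ Hyp κ) : lip p q ≤ -1/κ := by
  obtain ⟨hpp, ha⟩ := hp
  obtain ⟨hqq, hb⟩ := hq
  simp only [lip] at hpp hqq ⊢
  set a := p (Fin.last n)
  set b := q (Fin.last n)
  set c := 1/κ with hc_def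
  have hc : 0 < c := by positivity
  have hneg : (-1:ℝ)/κ = -c := by rw [hc_def]; ring
  rw [hneg] at hpp hqq ⊢
  have hcs := Finset.sum_mul_sq_le_sq_mul_sq Finset.univ (fun i : Fin n => p i.castSucc)
    (fun i : Fin n => q i.castSucc)
  simp only [pow_two] at hcs
  rw [show ∑ i : Fin n, p i.castSucc * p i.castSucc = a * a - c by linarith,
    show ∑ i : Fin n, q i.castSucc * q i.castSucc = b * b - c by linarith] at hcs
  have ha2 : c ≤ a * a := by
    linarith [Finset.sum_nonneg fun (i : Fin n) (_ : i ∈ Finset.univ) =>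
      mul_self_nonneg (p i.castSucc)]
  have hb2 : c ≤ b * b := by
    linarith [Finset.sum_nonneg fun (i : Fin n) (_ : i ∈ Finset.univ) =>
      mul_self_nonneg (q i.castSucc)]
  have hab : c ≤ a * b := by nlinarith [mul_pos ha hb]
  -- `(ab - c)² - (a² - c)(b² - c) = c (a - b)²`
  have hsq : (∑ i : Fin n, p i.castSucc * q i.castSucc) ^ 2 ≤ (a * b - c) ^ 2 := by
    nlinarith [mul_nonneg hc.le (sq_nonneg (a - b))]
  linarith [(abs_le_of_sq_le_sq' hsq (by linarith)).2]

lemma exists_pos_smul_of_mem_coneOf {n : ℕ} {C : Set (Fin (n+1) → ℝ)} {u : Fin (n+1) → ℝ}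
    (hu : u ∈ coneOf C) (hu0 : u ≠ 0) : ∃ t : ℝ, 0 < t ∧ ∃ p ∈ C, u = t • p := by
  obtain ⟨t, ht0, p, hpC, rfl⟩ := hu
  refine ⟨t, ht0.lt_of_ne ?_, p, hpC, rfl⟩
  rintro rfl
  exact hu0 (zero_smul ℝ p)

lemma sqrt_neg_mul_lip_smul_self {n : ℕ} {κ : ℝ} (hκ : κ ≠ 0) {t : ℝ} (ht : 0 ≤ t)
    {p : Fin (n+1) → ℝ} (hp : p ∈ Hyp κ) : Real.sqrt (-(κ * lip (t • p) (t • p))) = t := by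
  rw [lip_smul_left, lip_smul_right, hp.1,
    show -(κ * (t * (t * (-1 / κ)))) = t ^ 2 by field_simp, Real.sqrt_sq ht]

lemma inv_sqrt_neg_mul_lip_smul_self_smul {n : ℕ} {κ : ℝ} (hκ : κ ≠ 0) {t : ℝ} (ht : 0 < t)
    {p : Fin (n+1) → ℝ} (hp : p ∈ Hyp κ) :
    (Real.sqrt (-(κ * lip (t • p) (t • p))))⁻¹ • (t • p) = p := by
  rw [sqrt_neg_mul_lip_smul_self hκ ht.le hp, smul_smul, inv_mul_cancel₀ ht.ne', one_smul]

theorem last_coordinate_condition_implies_euclidean_condition_general {n : ℕ} (κ : ℝ) (hκ : 0 < κ)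
    (C : Set (Fin (n+1) → ℝ)) (hC : C ⊆ Hyp κ)
    (p u : Fin (n+1) → ℝ) (hu : u ∈ coneOf C) (hu0 : u ≠ 0)
    (hcond : ∀ q ∈ C, 0 ≤ (p (Fin.last n) - u (Fin.last n)) *
      (q (Fin.last n) - u (Fin.last n) / Real.sqrt (-(κ * lip u u)))) :
    ∀ q ∈ C, 0 ≤ edot ((2 * p (Fin.last n)) • (Pi.single (Fin.last n) 1 : Fin (n+1) → ℝ) - u)
      (q - (Real.sqrt (-(κ * lip u u)))⁻¹ • u) := by
  obtain ⟨t, ht, p', hp'C, rfl⟩ := exists_pos_smul_of_mem_coneOf hu hu0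
  have hp' : p' ∈ Hyp κ := hC hp'C
  intro q hq
  have hlast : 0 ≤ (p (Fin.last n) - t * p' (Fin.last n)) * (q (Fin.last n) - p' (Fin.last n)) := by
    simpa [sqrt_neg_mul_lip_smul_self hκ.ne' ht.le hp', ht.ne'] using hcond q hq
  have hlor : lip (t • p') (q - p') ≤ 0 := by
    rw [lip_smul_left, lip_sub_right, hp'.1]
    nlinarith [lip_le_of_mem_Hyp hκ hp' (hC hq)]
  rw [inv_sqrt_neg_mul_lip_smul_self_smul hκ.ne' ht hp', edot_two_mul_smul_single_sub]
  simp only [Pi.sub_apply, Pi.smul_apply, smul_eq_mul]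
  linarith

/-- Implication (i) ⟹ (ii) of the sufficient condition for computing the intrinsic
κ-projection: the componentwise last-coordinate condition implies the Euclidean
inequality (2p_{n+1}e^{n+1} − u)ᵀ(q − u/√(−κ⟨u,u⟩)) ≥ 0 for all q ∈ C. -/
theorem last_coordinate_condition_implies_euclidean_condition {n : ℕ} (κ : ℝ) (hκ : 0 < κ)
    (C : Set (Fin (n+1) → ℝ)) (hC : C ⊆ Hyp κ) (hCc : IsClosed C)
    (hconv : Convex ℝ (coneOf C))
    (p u : Fin (n+1) → ℝ) (hp : p ∈ Hyp κ) (hu : u ∈ coneOf C) (hu0 : u ≠ 0)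
    (hcond : ∀ q ∈ C, 0 ≤ (p (Fin.last n) - u (Fin.last n)) *
      (q (Fin.last n) - u (Fin.last n) / Real.sqrt (-(κ * lip u u)))) :
    ∀ q ∈ C, 0 ≤ edot ((2 * p (Fin.last n)) • (Pi.single (Fin.last n) 1 : Fin (n+1) → ℝ) - u)
      (q - (Real.sqrt (-(κ * lip u u)))⁻¹ • u) :=
  last_coordinate_condition_implies_euclidean_condition_general κ hκ C hC p u hu hu0 hcond
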